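/- For integers 0 ≤ 2s ≤ L, the polynomial [L choose s]_q - [L choose s-1]_q equals q^{n(λ')} (q;q)_L / H_λ(q) where λ = (2^s, 1^{L-2s}), n(λ') = s, and H_λ(q) = ∏_{x∈λ}(1 - q^{h(x)}) is the hook-length polynomial; equivalently [L choose s]_q - [L choose s-1]_q = q^s (q;q)_L (1 - q^{L-2s+1}) / ((q;q)_s (q;q)_{L-s+1}). -/

import Mathlib

/-!
Both Gaussian binomials share the factor `(q;q)_L / ((q;q)_s (q;q)_{L-s+1})`, after which their
difference is `(1 - q^{L-s+1}) - (1 - q^s) = q^s (1 - q^{L-2s+1})`. On the other side, the first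
column of `λ = (2^s, 1^{L-2s})` has hooks `L-s+1, …, L-2s+2` and `L-2s, …, 1`, the second column
`s, …, 1`, so `H_λ(q) (1 - q^{L-2s+1}) = (q;q)_s (q;q)_{L-s+1}`.
-/

open PowerSeries Finset

noncomputable def qPoch (n : ℕ) : PowerSeries ℚ :=
  ∏ k ∈ Finset.range n, (1 - (X : PowerSeries ℚ) ^ (k + 1))

noncomputable def gauss (L : ℕ) (s : ℤ) : PowerSeries ℚ :=
  if 0 ≤ s ∧ s ≤ (L : ℤ) then
    qPoch L * (qPoch s.toNat)⁻¹ * (qPoch (L - s.toNat))⁻¹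
  else 0

/-- Row lengths (0-indexed) of the partition `λ = (2^s, 1^{L-2s})`. -/
def rowLen (L s i : ℕ) : ℕ := if i < s then 2 else if i < L - s then 1 else 0

/-- Column lengths of `λ = (2^s, 1^{L-2s})`. -/
def colLen (L s j : ℕ) : ℕ :=
  ((Finset.range (L - s)).filter (fun i => j < rowLen L s i)).card

/-- The hook length of the cell `(i, j)` (0-indexed) of `λ = (2^s, 1^{L-2s})`. -/
def hookLen (L s i j : ℕ) : ℕ := (rowLen L s i - j) + (colLen L s j - i) - 1

/-- The hook-length polynomial `H_λ(q) = ∏_{x ∈ λ} (1 - q^{h(x)})` for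
`λ = (2^s, 1^{L-2s})`. -/
noncomputable def Hpoly (L s : ℕ) : PowerSeries ℚ :=
  ∏ i ∈ Finset.range (L - s), ∏ j ∈ Finset.range (rowLen L s i),
    (1 - (X : PowerSeries ℚ) ^ (hookLen L s i j))

lemma qPoch_zero : qPoch 0 = 1 := Finset.prod_range_zero _

lemma qPoch_succ (n : ℕ) : qPoch (n + 1) = qPoch n * (1 - (X : PowerSeries ℚ) ^ (n + 1)) :=
  Finset.prod_range_succ _ n

lemma qPoch_add (a b : ℕ) :
    qPoch (a + b) = qPoch a * ∏ i ∈ range b, (1 - (X : PowerSeries ℚ) ^ (a + b - i)) := by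
  rw [qPoch, prod_range_add, ← prod_range_reflect _ b]
  refine congrArg _ (prod_congr rfl fun i hi => ?_)
  rw [mem_range] at hi
  rw [show a + (b - 1 - i) + 1 = a + b - i by omega]

lemma qPoch_eq_prod_range_pow_sub (n : ℕ) :
    qPoch n = ∏ i ∈ range n, (1 - (X : PowerSeries ℚ) ^ (n - i)) := by
  simpa [qPoch_zero] using qPoch_add 0 n

lemma inv_qPoch_eq_mul_inv_qPoch_succ (n : ℕ) :
    (qPoch n)⁻¹ = (1 - (X : PowerSeries ℚ) ^ (n + 1)) * (qPoch (n + 1))⁻¹ := by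
  rw [qPoch_succ, PowerSeries.mul_inv_rev, ← mul_assoc,
    PowerSeries.mul_inv_cancel _ (by simp), one_mul]

lemma gauss_natCast_of_le {L s : ℕ} (h : s ≤ L) :
    gauss L s = qPoch L * (qPoch s)⁻¹ * (qPoch (L - s))⁻¹ := by
  rw [gauss, if_pos ⟨Int.natCast_nonneg s, by exact_mod_cast h⟩, Int.toNat_natCast]

lemma gauss_of_neg (L : ℕ) {s : ℤ} (h : s < 0) : gauss L s = 0 :=
  if_neg fun hs => by omega

lemma gauss_sub_gauss_sub_one (s m : ℕ) :
    gauss (2 * s + m) s - gauss (2 * s + m) ((s : ℤ) - 1) =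
      (X : PowerSeries ℚ) ^ s * qPoch (2 * s + m) * (1 - (X : PowerSeries ℚ) ^ (m + 1)) *
        (qPoch s)⁻¹ * (qPoch (s + m + 1))⁻¹ := by
  have hsm : 2 * s + m - s = s + m := by omega
  rw [gauss_natCast_of_le (by omega), hsm, inv_qPoch_eq_mul_inv_qPoch_succ (s + m)]
  rcases s with _ | k
  · rw [gauss_of_neg _ (by omega), qPoch_zero]
    ring
  · have hk : ((k + 1 : ℕ) : ℤ) - 1 = (k : ℕ) := by omega
    rw [hk, gauss_natCast_of_le (by omega), show 2 * (k + 1) + m - k = k + 1 + m + 1 by omega,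
      inv_qPoch_eq_mul_inv_qPoch_succ k]
    ring

section Hooks

variable (s m : ℕ)

lemma colLen_zero : colLen (2 * s + m) s 0 = s + m := by
  have hsm : 2 * s + m - s = s + m := by omega
  rw [colLen, hsm, filter_true_of_mem, card_range]
  intro i hi
  rw [mem_range] at hi
  simp only [rowLen, hsm]
  split_ifs <;> omega

lemma colLen_one : colLen (2 * s + m) s 1 = s := by
  have hsm : 2 * s + m - s = s + m := by omega
  have hfilter : (range (s + m)).filter (fun i => 1 < rowLen (2 * s + m) s i) = range s := by
    ext i
    simp only [mem_filter, mem_range, rowLen, hsm]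
    split_ifs <;> omega
  rw [colLen, hsm, hfilter, card_range]

variable {s m}

lemma rowLen_of_lt {i : ℕ} (hi : i < s) : rowLen (2 * s + m) s i = 2 := by
  simp [rowLen, hi]

lemma rowLen_add_of_lt {t : ℕ} (ht : t < m) : rowLen (2 * s + m) s (s + t) = 1 := by
  simp only [rowLen]
  split_ifs <;> omega

lemma hookLen_zero_of_lt {i : ℕ} (hi : i < s) :
    hookLen (2 * s + m) s i 0 = m + 1 + s - i := by
  rw [hookLen, colLen_zero, rowLen_of_lt hi]
  omega

lemma hookLen_one_of_lt {i : ℕ} (hi : i < s) : hookLen (2 * s + m) s i 1 = s - i := by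
  rw [hookLen, colLen_one, rowLen_of_lt hi]
  omega

lemma hookLen_add_zero {t : ℕ} (ht : t < m) : hookLen (2 * s + m) s (s + t) 0 = m - t := by
  rw [hookLen, colLen_zero, rowLen_add_of_lt ht]
  omega

variable (s m)

lemma Hpoly_two_mul_add_eq :
    Hpoly (2 * s + m) s =
      (∏ i ∈ range s, (1 - (X : PowerSeries ℚ) ^ (m + 1 + s - i))) * qPoch s * qPoch m := by
  rw [Hpoly, show 2 * s + m - s = s + m by omega, prod_range_add, qPoch_eq_prod_range_pow_sub s,
    qPoch_eq_prod_range_pow_sub m, ← prod_mul_distrib]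
  congr 1
  · refine prod_congr rfl fun i hi => ?_
    rw [mem_range] at hi
    rw [rowLen_of_lt hi, prod_range_succ, prod_range_one, hookLen_zero_of_lt hi,
      hookLen_one_of_lt hi]
  · refine prod_congr rfl fun t ht => ?_
    rw [mem_range] at ht
    rw [rowLen_add_of_lt ht, prod_range_one, hookLen_add_zero ht]

lemma Hpoly_mul_one_sub_X_pow :
    Hpoly (2 * s + m) s * (1 - (X : PowerSeries ℚ) ^ (m + 1)) = qPoch s * qPoch (s + m + 1) := by
  rw [Hpoly_two_mul_add_eq, show s + m + 1 = m + 1 + s by omega, qPoch_add, qPoch_succ]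
  ring

lemma inv_Hpoly :
    (Hpoly (2 * s + m) s)⁻¹ =
      (1 - (X : PowerSeries ℚ) ^ (m + 1)) * (qPoch s)⁻¹ * (qPoch (s + m + 1))⁻¹ := by
  have h := congrArg (·⁻¹) (Hpoly_mul_one_sub_X_pow s m)
  simp only [PowerSeries.mul_inv_rev] at h
  rw [mul_assoc, ← mul_comm (qPoch (s + m + 1))⁻¹, ← h, ← mul_assoc,
    PowerSeries.mul_inv_cancel _ (by simp), one_mul]

end Hooks

/-- For `0 ≤ 2s ≤ L` and `λ = (2^s, 1^{L-2s})` (so `n(λ') = s`),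
`[L, s]_q - [L, s-1]_q = q^{n(λ')} (q;q)_L / H_λ(q)`; equivalently,
`[L, s]_q - [L, s-1]_q = q^s (q;q)_L (1 - q^{L-2s+1}) / ((q;q)_s (q;q)_{L-s+1})`. -/
theorem stmt14 (L s : ℕ) (h : 2 * s ≤ L) :
    gauss L s - gauss L ((s : ℤ) - 1) = (X : PowerSeries ℚ) ^ s * qPoch L * (Hpoly L s)⁻¹ ∧
      gauss L s - gauss L ((s : ℤ) - 1) =
        (X : PowerSeries ℚ) ^ s * qPoch L * (1 - (X : PowerSeries ℚ) ^ (L - 2 * s + 1)) *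
          (qPoch s)⁻¹ * (qPoch (L - s + 1))⁻¹ := by
  obtain ⟨m, rfl⟩ := Nat.exists_eq_add_of_le h
  rw [gauss_sub_gauss_sub_one, inv_Hpoly, Nat.add_sub_cancel_left,
    show 2 * s + m - s + 1 = s + m + 1 by omega]
  exact ⟨by ring, rfl⟩
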